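/- Every cycle of length 6 in the crossing graph of K6 can be obtained, by applying a rotation x ↦ x+k (mod 6) or reflection x ↦ c−x (mod 6) of the vertex labels together with a cyclic rotation or reversal of the sequence, from one of the following three cyclic sequences of interior edges (ab denoting {a,b}): (13,24,35,14,36,25), (13,24,35,46,15,26), (13,24,36,15,46,25). -/

import Mathlib

/-- The cyclic length of the chord joining vertices `a` and `b` of `K₆`,
whose vertices are labeled by `ZMod 6` in cyclic order around a circle. -/
def cycLen (a b : ZMod 6) : ℕ := min (b - a).val (a - b).val

/-- An interior edge of `K₆`: a 2-element set of vertices at cyclic distance at least 2. -/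
def InteriorEdge (e : Finset (ZMod 6)) : Prop :=
  e.card = 2 ∧ ∀ a ∈ e, ∀ b ∈ e, a ≠ b → 2 ≤ cycLen a b

/-- A short edge of `K₆`: a 2-element set of vertices at cyclic distance exactly 2. -/
def ShortEdge (e : Finset (ZMod 6)) : Prop :=
  e.card = 2 ∧ ∀ a ∈ e, ∀ b ∈ e, a ≠ b → cycLen a b = 2

/-- A long edge of `K₆`: a 2-element set of vertices at cyclic distance exactly 3. -/
def LongEdge (e : Finset (ZMod 6)) : Prop :=
  e.card = 2 ∧ ∀ a ∈ e, ∀ b ∈ e, a ≠ b → cycLen a b = 3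

/-- `x` lies in the open cyclic arc from `a` to `b` (in the cyclic order of labels). -/
def InArc (a b x : ZMod 6) : Prop := 0 < (x - a).val ∧ (x - a).val < (b - a).val

/-- Two chords `{a,b}` and `{c,d}` cross iff their endpoint sets are disjoint and
exactly one of `c`, `d` lies in the open cyclic arc from `a` to `b`. -/
def Crosses (e f : Finset (ZMod 6)) : Prop :=
  Disjoint e f ∧ ∃ a b c d : ZMod 6, a ≠ b ∧ c ≠ d ∧ e = {a, b} ∧ f = {c, d} ∧
    Xor' (InArc a b c) (InArc a b d)

def e13 : Finset (ZMod 6) := {1, 3}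
def e15 : Finset (ZMod 6) := {1, 5}
def e24 : Finset (ZMod 6) := {2, 4}
def e26 : Finset (ZMod 6) := {2, 6}
def e35 : Finset (ZMod 6) := {3, 5}
def e46 : Finset (ZMod 6) := {4, 6}
def e14 : Finset (ZMod 6) := {1, 4}
def e25 : Finset (ZMod 6) := {2, 5}
def e36 : Finset (ZMod 6) := {3, 6}

/-- A symmetry of the vertex labels: a rotation `x ↦ x + k` or a reflection
`x ↦ k - x` of `ZMod 6`. -/
def DihedralMap (φ : ZMod 6 → ZMod 6) : Prop :=
  (∃ k : ZMod 6, ∀ x, φ x = x + k) ∨ (∃ k : ZMod 6, ∀ x, φ x = k - x)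

/-- A symmetry of a cyclic sequence of length `s`: a cyclic rotation `i ↦ i + t`
or a reversal `i ↦ t - i` of the index set `ZMod s`. -/
def SeqSym {s : ℕ} (ψ : ZMod s → ZMod s) : Prop :=
  (∃ t : ZMod s, ∀ i, ψ i = i + t) ∨ (∃ t : ZMod s, ∀ i, ψ i = t - i)

/-- A cycle of length `s` in the crossing graph of `K₆`: a cyclic sequence of `s`
distinct interior edges, each crossing the next (cyclically). -/
def IsCycle {s : ℕ} (c : ZMod s → Finset (ZMod 6)) : Prop :=
  Function.Injective c ∧ (∀ i, InteriorEdge (c i)) ∧ (∀ i, Crosses (c i) (c (i + 1)))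

/-- `d` is obtained from `c` by applying a rotation or reflection of the vertex labels
together with a cyclic rotation or reversal of the sequence. -/
def ObtainedFrom {s : ℕ} (c d : ZMod s → Finset (ZMod 6)) : Prop :=
  ∃ (φ : ZMod 6 → ZMod 6) (ψ : ZMod s → ZMod s),
    DihedralMap φ ∧ SeqSym ψ ∧ ∀ i, d i = (c (ψ i)).image φ

def cyc6a : ZMod 6 → Finset (ZMod 6) := fun i => [e13, e24, e35, e14, e36, e25].getD i.val ∅
def cyc6b : ZMod 6 → Finset (ZMod 6) := fun i => [e13, e24, e35, e46, e15, e26].getD i.val ∅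
def cyc6c : ZMod 6 → Finset (ZMod 6) := fun i => [e13, e24, e36, e15, e46, e25].getD i.val ∅

/-!
The interior chords are the short chords `{i, i+2}` (`i ∈ ℤ/6`) and the long chords `{j, j+3}`
(`j ∈ ℤ/3`). Two short chords cross iff their indices are adjacent, any two long chords cross,
and `{i, i+2}` crosses exactly the long chord through `i+1`: the crossing graph is a hexagon and
a triangle, each long chord joined to two opposite short chords. Rotations and reflections act
by affine maps on these indices, so the 6-cycles up to symmetry are found by a finite search over
index sequences.
-/

instance (e : Finset (ZMod 6)) : Decidable (InteriorEdge e) := by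
  unfold InteriorEdge; infer_instance

instance (a b x : ZMod 6) : Decidable (InArc a b x) := by
  unfold InArc; infer_instance

instance (e f : Finset (ZMod 6)) : Decidable (Crosses e f) := by
  unfold Crosses Xor'; infer_instance

abbrev Chord := ZMod 6 ⊕ ZMod 3

def chord : Chord → Finset (ZMod 6)
  | .inl i => {i, i + 2}
  | .inr j => {(j.val : ZMod 6), (j.val : ZMod 6) + 3}

def ChordsCross : Chord → Chord → Prop
  | .inl i, .inl i' => i' = i + 1 ∨ i = i' + 1
  | .inl i, .inr j | .inr j, .inl i => j = (i + 1).val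
  | .inr j, .inr j' => j ≠ j'

instance : DecidableRel ChordsCross
  | .inl _, .inl _ | .inl _, .inr _ | .inr _, .inl _ | .inr _, .inr _ => by
    unfold ChordsCross; infer_instance

theorem exists_chord_of_interiorEdge {e : Finset (ZMod 6)} (he : InteriorEdge e) :
    ∃ x, chord x = e := by
  revert e; decide

theorem crosses_chord_iff (x y : Chord) : Crosses (chord x) (chord y) ↔ ChordsCross x y := by
  revert x y; decide

def dihedralAct {n : ℕ} : DihedralGroup n → ZMod n → ZMod n
  | .r k, x => x + k
  | .sr k, x => k - x

theorem dihedralMap_dihedralAct (g : DihedralGroup 6) : DihedralMap (dihedralAct g) := by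
  cases g with
  | r k => exact .inl ⟨k, fun _ => rfl⟩
  | sr k => exact .inr ⟨k, fun _ => rfl⟩

theorem seqSym_dihedralAct {n : ℕ} (g : DihedralGroup n) : SeqSym (dihedralAct g) := by
  cases g with
  | r k => exact .inl ⟨k, fun _ => rfl⟩
  | sr k => exact .inr ⟨k, fun _ => rfl⟩

def chordAct : DihedralGroup 6 → Chord → Chord
  | .r k, .inl i => .inl (i + k)
  | .r k, .inr j => .inr (j + k.val)
  | .sr k, .inl i => .inl (k - i - 2)
  | .sr k, .inr j => .inr (k.val - j)

theorem image_dihedralAct_chord (g : DihedralGroup 6) (x : Chord) :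
    (chord x).image (dihedralAct g) = chord (chordAct g x) := by
  revert g x; decide

def ChordObtainedFrom (w v : ZMod 6 → Chord) : Prop :=
  ∃ g h : DihedralGroup 6, ∀ i, v i = chordAct g (w (dihedralAct h i))

instance (w v : ZMod 6 → Chord) : Decidable (ChordObtainedFrom w v) := by
  unfold ChordObtainedFrom; infer_instance

theorem ChordObtainedFrom.obtainedFrom {w v : ZMod 6 → Chord} (hwv : ChordObtainedFrom w v) :
    ObtainedFrom (chord ∘ w) (chord ∘ v) := by
  obtain ⟨g, h, hv⟩ := hwv
  refine ⟨dihedralAct g, dihedralAct h, dihedralMap_dihedralAct g, seqSym_dihedralAct h,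
    fun i => ?_⟩
  simp only [Function.comp_apply, hv, image_dihedralAct_chord]

def cyc6aChords : ZMod 6 → Chord := ![.inl 1, .inl 2, .inl 3, .inr 1, .inr 0, .inr 2]
def cyc6bChords : ZMod 6 → Chord := ![.inl 1, .inl 2, .inl 3, .inl 4, .inl 5, .inl 0]
def cyc6cChords : ZMod 6 → Chord := ![.inl 1, .inl 2, .inr 0, .inl 5, .inl 4, .inr 2]

theorem chord_comp_cyc6aChords : chord ∘ cyc6aChords = cyc6a := by funext i; revert i; decide
theorem chord_comp_cyc6bChords : chord ∘ cyc6bChords = cyc6b := by funext i; revert i; decide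
theorem chord_comp_cyc6cChords : chord ∘ cyc6cChords = cyc6c := by funext i; revert i; decide

def IsStandardHexagon (v : ZMod 6 → Chord) : Prop :=
  ChordObtainedFrom cyc6aChords v ∨ ChordObtainedFrom cyc6bChords v ∨
    ChordObtainedFrom cyc6cChords v

instance (v : ZMod 6 → Chord) : Decidable (IsStandardHexagon v) := by
  unfold IsStandardHexagon; infer_instance

/- Phrased as a search tree, so that `decide` abandons a sequence as soon as it stops being a
path of distinct chords. -/
set_option synthInstance.maxSize 256 in
theorem isStandardHexagon_getD : ∀ x₀ x₁, ChordsCross x₀ x₁ →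
    ∀ x₂, ChordsCross x₁ x₂ ∧ x₂ ≠ x₀ →
    ∀ x₃, ChordsCross x₂ x₃ ∧ x₃ ≠ x₀ ∧ x₃ ≠ x₁ →
    ∀ x₄, ChordsCross x₃ x₄ ∧ x₄ ≠ x₀ ∧ x₄ ≠ x₁ ∧ x₄ ≠ x₂ →
    ∀ x₅, ChordsCross x₄ x₅ ∧ ChordsCross x₅ x₀ ∧ x₅ ≠ x₁ ∧ x₅ ≠ x₂ ∧ x₅ ≠ x₃ →
    IsStandardHexagon fun i => [x₀, x₁, x₂, x₃, x₄, x₅].getD i.val x₀ := by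
  decide +kernel

theorem isStandardHexagon_of_injective {v : ZMod 6 → Chord} (hinj : Function.Injective v)
    (hcross : ∀ i, ChordsCross (v i) (v (i + 1))) : IsStandardHexagon v := by
  have hv : v = fun i => [v 0, v 1, v 2, v 3, v 4, v 5].getD i.val (v 0) := by
    funext i; fin_cases i <;> rfl
  have hne : ∀ i j, i ≠ j → v i ≠ v j := fun i j hij h => hij (hinj h)
  rw [hv]
  exact isStandardHexagon_getD _ _ (hcross 0)
    _ ⟨hcross 1, hne 2 0 (by decide)⟩
    _ ⟨hcross 2, hne 3 0 (by decide), hne 3 1 (by decide)⟩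
    _ ⟨hcross 3, hne 4 0 (by decide), hne 4 1 (by decide), hne 4 2 (by decide)⟩
    _ ⟨hcross 4, hcross 5, hne 5 1 (by decide), hne 5 2 (by decide), hne 5 3 (by decide)⟩

/-- Every cycle of length 6 in the crossing graph of `K₆` is obtained, via a rotation or
reflection of the vertex labels together with a cyclic rotation or reversal of the
sequence, from one of `(13,24,35,14,36,25)`, `(13,24,35,46,15,26)`,
`(13,24,36,15,46,25)`. -/
theorem stmt_16 :
    ∀ c : ZMod 6 → Finset (ZMod 6), IsCycle c →
      ObtainedFrom cyc6a c ∨ ObtainedFrom cyc6b c ∨ ObtainedFrom cyc6c c := by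
  rintro c ⟨hinj, hint, hcross⟩
  choose v hv using fun i => exists_chord_of_interiorEdge (hint i)
  obtain rfl : c = chord ∘ v := funext fun i => (hv i).symm
  have hstd : IsStandardHexagon v :=
    isStandardHexagon_of_injective hinj.of_comp fun i => (crosses_chord_iff _ _).1 (hcross i)
  rw [← chord_comp_cyc6aChords, ← chord_comp_cyc6bChords, ← chord_comp_cyc6cChords]
  exact hstd.imp ChordObtainedFrom.obtainedFrom
    (Or.imp ChordObtainedFrom.obtainedFrom ChordObtainedFrom.obtainedFrom)
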